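/- Let L be a coherent limit operator on a set X with derived topology τ_L, and let (L^i)_{i ≥ 1} be its transfinite iterates. Then for every ordinal i ≥ 1 and every sequence σ in X, L^i(σ) ⊆ L_{τ_L}(σ); that is, every point of L^i(σ) is a limit of σ in the topology τ_L. -/

import Mathlib

open Set Filter Topology

universe u

/-- A limit operator on `X`: a map from sequences to sets of "limits",
compatible with subsequences. -/
def IsLimitOp {X : Type u} (L : (ℕ → X) → Set X) : Prop :=
  ∀ (σ : ℕ → X) (φ : ℕ → ℕ), StrictMono φ → L σ ⊆ L (σ ∘ φ)

/-- `C` is sequentially closed with respect to the limit operator `L`. -/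
def SeqClosedFor {X : Type u} (L : (ℕ → X) → Set X) (C : Set X) : Prop :=
  ∀ σ : ℕ → X, (∀ n, σ n ∈ C) → L σ ⊆ C

/-- The topology derived from a limit operator `L`: its closed sets are exactly
the sets `C` such that `L σ ⊆ C` for every sequence `σ` with values in `C`. -/
def derivedTop {X : Type u} (L : (ℕ → X) → Set X) (hL : IsLimitOp L) :
    TopologicalSpace X :=
  TopologicalSpace.ofClosed {C | SeqClosedFor L C}
    (fun σ h => absurd (h 0) (Set.notMem_empty _))
    (fun A hA σ hσ p hp => by
      rw [Set.mem_sInter]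
      intro C hC
      exact hA hC σ (fun n => Set.mem_sInter.mp (hσ n) C hC) hp)
    (by
      intro C hC B hB σ hσ p hp
      by_cases hinf : {n | σ n ∈ C}.Infinite
      · exact Or.inl (hC _ (fun n => Nat.nth_mem_of_infinite hinf n)
          (hL σ _ (Nat.nth_strictMono hinf) hp))
      · have hfin : {n | σ n ∈ C}.Finite := Set.not_infinite.mp hinf
        have hBinf : {n | σ n ∈ B}.Infinite :=
          Set.Infinite.mono (fun n hn => (hσ n).resolve_left hn) hfin.infinite_compl
        exact Or.inr (hB _ (fun n => Nat.nth_mem_of_infinite hBinf n)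
          (hL σ _ (Nat.nth_strictMono hBinf) hp)))

/-- The limit operator associated to a topology `t`: it assigns to each sequence
the set of all its limits in `t`. -/
def assocLimOp {X : Type u} (t : TopologicalSpace X) : (ℕ → X) → Set X :=
  fun σ => {p | Filter.Tendsto σ Filter.atTop (@nhds X t p)}

theorem assocLimOp_isLimitOp {X : Type u} (t : TopologicalSpace X) :
    IsLimitOp (assocLimOp t) :=
  fun _σ _φ hφ _p hp => hp.comp hφ.tendsto_atTop

/-- `τ_Seq`: the topology derived from the limit operator associated to `t`. -/
def seqModTop {X : Type u} (t : TopologicalSpace X) : TopologicalSpace X :=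
  derivedTop (assocLimOp t) (assocLimOp_isLimitOp t)

/-- `L` is of first order on `D`. -/
def IsFirstOrderOpOn {X : Type u} (L : (ℕ → X) → Set X) (hL : IsLimitOp L)
    (D : Set X) : Prop :=
  ∀ σ : ℕ → X, (∀ n, σ n ∈ D) → ∀ p ∈ D,
    (p ∈ L σ ↔ Filter.Tendsto σ Filter.atTop (@nhds X (derivedTop L hL) p))

/-- `L` is of first order. -/
def IsFirstOrderOp {X : Type u} (L : (ℕ → X) → Set X) (hL : IsLimitOp L) : Prop :=
  ∀ (σ : ℕ → X) (p : X),
    p ∈ L σ ↔ Filter.Tendsto σ Filter.atTop (@nhds X (derivedTop L hL) p)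

/-- A limit operator is coherent if every constant sequence has its value as a limit. -/
def CoherentOp {X : Type u} (L : (ℕ → X) → Set X) : Prop :=
  ∀ x : X, x ∈ L (fun _ => x)

/-- The transfinite iterates of a limit operator: `L^1 σ = L σ` and, for `i ≠ 1`,
`L^i σ = {p | p ∈ L ρ for some sequence ρ with values in ⋃_{j<i} L^j σ}`. -/
noncomputable def iterOp {X : Type u} (L : (ℕ → X) → Set X) (σ : ℕ → X)
    (i : Ordinal.{0}) : Set X :=
  if i = 1 then L σ
  else {p | ∃ ρ : ℕ → X,
    (∀ n, ∃ j : Ordinal.{0}, ∃ _hj : j < i, ρ n ∈ iterOp L σ j) ∧ p ∈ L ρ}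
termination_by i

open Classical in
/-- The modified limit operator `L*` relative to a subset `D`. -/
noncomputable def modOp {X : Type u} (L : (ℕ → X) → Set X) (D : Set X) :
    (ℕ → X) → Set X := fun σ =>
  if ∃ φ : ℕ → ℕ, StrictMono φ ∧ ∃ p ∈ D, p ∈ L (σ ∘ φ) then L σ ∩ D else L σ

/-- The `D`-separating topology `τ*`: generated by the subbasis consisting of the
`t`-open sets together with the complements of compact subsets of `D`. -/
def sepTop {X : Type u} (t : TopologicalSpace X) (D : Set X) : TopologicalSpace X :=
  TopologicalSpace.generateFrom
    ({U : Set X | @IsOpen X t U} ∪ {V : Set X | ∃ K, K ⊆ D ∧ @IsCompact X t K ∧ V = Kᶜ})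

/-- Condition (A_Fin): `t'` refines `t`. -/
def AFin {X : Type u} (t t' : TopologicalSpace X) : Prop :=
  ∀ U : Set X, @IsOpen X t U → @IsOpen X t' U

/-- Condition (A_Sep): every `p ∈ D` and `q ∉ D` are separated by a `t`-open set
and a `t'`-open set. -/
def ASep {X : Type u} (t t' : TopologicalSpace X) (D : Set X) : Prop :=
  ∀ p ∈ D, ∀ q ∈ (Dᶜ : Set X), ∃ U V : Set X,
    @IsOpen X t U ∧ @IsOpen X t' V ∧ p ∈ U ∧ q ∈ V ∧ U ∩ V = ∅

/-- The restriction of a limit operator `L` to a subset `D`, as an operator on `↥D`: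
`L|_D(σ) = L(σ) ∩ D`. -/
def restrictOp {X : Type u} (L : (ℕ → X) → Set X) (D : Set X) :
    (ℕ → D) → Set D :=
  fun σ => {d : D | (d : X) ∈ L (fun n => (σ n : X))}

/- Every `L`-limit of `σ` is a `τ_L`-limit of `σ`, and the `τ_L`-limits of `σ` form a `τ_L`-closed,
hence `L`-sequentially closed, set containing `L σ`. A transfinite induction shows that every
iterate `L^i σ` stays inside any such set. -/

theorem isClosed_setOf_le_nhds {X : Type*} [TopologicalSpace X] (f : Filter X) :
    IsClosed {p | f ≤ 𝓝 p} := by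
  refine isClosed_of_closure_subset fun p hp => le_nhds_iff.mpr fun U hpU hU => ?_
  obtain ⟨q, hqU, hfq⟩ := mem_closure_iff.mp hp U hU hpU
  exact hfq (hU.mem_nhds hqU)

section LimitOp

variable {X : Type u} {L : (ℕ → X) → Set X}

theorem isClosed_derivedTop_iff (hL : IsLimitOp L) {C : Set X} :
    IsClosed[derivedTop L hL] C ↔ SeqClosedFor L C := by
  let := derivedTop L hL
  rw [← isOpen_compl_iff]
  exact Iff.of_eq (congrArg (SeqClosedFor L) (compl_compl C))

/- A sequence frequently outside an open neighbourhood `U` of `p` has a subsequence in the closed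
set `Uᶜ`, whose `L`-limits, `p` among them, lie in `Uᶜ`. -/
theorem tendsto_derivedTop_of_mem (hL : IsLimitOp L) {σ : ℕ → X} {p : X} (hp : p ∈ L σ) :
    Tendsto σ atTop (@nhds X (derivedTop L hL) p) := by
  let := derivedTop L hL
  refine tendsto_nhds.mpr fun U hU hpU => ?_
  by_contra hev
  have hinf : {n | σ n ∉ U}.Infinite :=
    Nat.frequently_atTop_iff_infinite.mp (not_eventually.mp hev)
  have hclosed : SeqClosedFor L Uᶜ := (isClosed_derivedTop_iff hL).mp hU.isClosed_compl
  exact hclosed (σ ∘ Nat.nth _) (fun n => Nat.nth_mem_of_infinite hinf n)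
    (hL σ _ (Nat.nth_strictMono hinf) hp) hpU

theorem iterOp_subset_of_seqClosedFor {C : Set X} (hC : SeqClosedFor L C) {σ : ℕ → X}
    (hσ : L σ ⊆ C) (i : Ordinal.{0}) : iterOp L σ i ⊆ C := by
  induction i using WellFoundedLT.induction with
  | _ i ih =>
    rw [iterOp]
    split_ifs
    · exact hσ
    · rintro p ⟨ρ, hρ, hp⟩
      refine hC ρ (fun n => ?_) hp
      obtain ⟨j, hj, hρj⟩ := hρ n
      exact ih j hj hρj

end LimitOp

theorem stmt_7_general {X : Type u} (L : (ℕ → X) → Set X) (hL : IsLimitOp L) :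
    ∀ i : Ordinal.{0}, 1 ≤ i → ∀ σ : ℕ → X,
      iterOp L σ i ⊆ {p | Filter.Tendsto σ Filter.atTop (@nhds X (derivedTop L hL) p)} := by
  intro i _ σ
  let := derivedTop L hL
  have hclosed : SeqClosedFor L {p | Tendsto σ atTop (𝓝 p)} :=
    (isClosed_derivedTop_iff hL).mp (isClosed_setOf_le_nhds _)
  exact iterOp_subset_of_seqClosedFor hclosed (fun p => tendsto_derivedTop_of_mem hL) i

theorem stmt_7 {X : Type u} (L : (ℕ → X) → Set X) (hL : IsLimitOp L)
    (hcoh : CoherentOp L) :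
    ∀ i : Ordinal.{0}, 1 ≤ i → ∀ σ : ℕ → X,
      iterOp L σ i ⊆ {p | Filter.Tendsto σ Filter.atTop (@nhds X (derivedTop L hL) p)} :=
  stmt_7_general L hL
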